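/- Under the primal error setting with coercivity constant α_A, for each n ∈ {1, …, N} one has (eⁿ)ᵀ M eⁿ + Δt·∑_{m=1}^{n} (eᵐ)ᵀ A_sym eᵐ ≤ (Δt/α_A)·∑_{m=1}^{n} ‖rᵐ‖₋₁². -/

import Mathlib

open Matrix BigOperators Finset

/-- The energy norm `‖v‖_{G*} = √(vᵀ G* v)` induced by a matrix `G`. -/
noncomputable def normG {d : ℕ} (G : Matrix (Fin d) (Fin d) ℝ) (v : Fin d → ℝ) : ℝ :=
  Real.sqrt (v ⬝ᵥ G.mulVec v)

/-- The dual norm `‖r‖₋₁ = sup_{v ≠ 0} (rᵀ v)/‖v‖_{G*}`. -/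
noncomputable def dualNorm {d : ℕ} (G : Matrix (Fin d) (Fin d) ℝ) (r : Fin d → ℝ) : ℝ :=
  ⨆ v : {v : Fin d → ℝ // v ≠ 0}, (r ⬝ᵥ (v : Fin d → ℝ)) / normG G (v : Fin d → ℝ)

/-- The symmetric part `(A + Aᵀ)/2` of a matrix. -/
noncomputable def symPart {d : ℕ} (A : Matrix (Fin d) (Fin d) ℝ) : Matrix (Fin d) (Fin d) ℝ :=
  ((1 : ℝ)/2) • (A + Aᵀ)


/-!
Test the scheme `(M + Δt A) eᵏ = M eᵏ⁻¹ - Δt rᵏ` with `eᵏ`. Since `M` is positive semidefinite,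
`2 (eᵏ)ᵀ M eᵏ⁻¹ ≤ (eᵏ)ᵀ M eᵏ + (eᵏ⁻¹)ᵀ M eᵏ⁻¹`; the residual term is bounded by
`‖rᵏ‖₋₁ ‖eᵏ‖_{G*}`, which Young's inequality and coercivity bound by
`‖rᵏ‖₋₁² / (2 α_A) + (eᵏ)ᵀ A_sym eᵏ / 2`. This gives a one-step energy inequality, which
telescopes from `e⁰ = 0`.
-/

namespace Matrix

variable {n : Type*}

theorem PosSemidef.isSymm_of_real {B : Matrix n n ℝ} (hB : B.PosSemidef) : B.IsSymm :=
  isHermitian_iff_isSymm.1 hB.isHermitian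

variable [Fintype n]

theorem IsSymm.dotProduct_mulVec_comm {α : Type*} [CommSemiring α] {B : Matrix n n α}
    (hB : B.IsSymm) (x y : n → α) : x ⬝ᵥ B *ᵥ y = y ⬝ᵥ B *ᵥ x := by
  rw [dotProduct_comm, dotProduct_mulVec, ← mulVec_transpose, hB.eq]

namespace PosSemidef

variable {B : Matrix n n ℝ}

theorem dotProduct_mulVec_self_nonneg (hB : B.PosSemidef) (x : n → ℝ) : 0 ≤ x ⬝ᵥ B *ᵥ x := by
  simpa using hB.dotProduct_mulVec_nonneg x

theorem dotProduct_mulVec_le_sqrt_mul_sqrt (hB : B.PosSemidef) (x y : n → ℝ) :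
    x ⬝ᵥ B *ᵥ y ≤ √(x ⬝ᵥ B *ᵥ x) * √(y ⬝ᵥ B *ᵥ y) := by
  classical
  have hsq : (x ⬝ᵥ B *ᵥ y) ^ 2 ≤ (x ⬝ᵥ B *ᵥ x) * (y ⬝ᵥ B *ᵥ y) := by
    simpa only [toBilin'_apply'] using (toBilin' B).apply_sq_le_of_symm
      (fun z => by simpa only [toBilin'_apply'] using hB.dotProduct_mulVec_self_nonneg z)
      (LinearMap.BilinForm.isSymm_iff.1 (isSymm_toBilin'_iff_isSymm.2 hB.isSymm_of_real)) x y
  rw [← Real.sqrt_mul (hB.dotProduct_mulVec_self_nonneg x)]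
  exact (le_abs_self _).trans (Real.abs_le_sqrt hsq)

theorem two_mul_dotProduct_mulVec_le (hB : B.PosSemidef) (x y : n → ℝ) :
    2 * (x ⬝ᵥ B *ᵥ y) ≤ x ⬝ᵥ B *ᵥ x + y ⬝ᵥ B *ᵥ y := by
  have h := hB.dotProduct_mulVec_self_nonneg (x - y)
  rw [mulVec_sub, dotProduct_sub, sub_dotProduct, sub_dotProduct,
    hB.isSymm_of_real.dotProduct_mulVec_comm y x] at h
  linarith

end PosSemidef

end Matrix

section DualNorm

variable {d : ℕ} {G : Matrix (Fin d) (Fin d) ℝ}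

@[simp]
theorem normG_neg (v : Fin d → ℝ) : normG G (-v) = normG G v := by
  simp [normG, mulVec_neg]

theorem normG_pos (hG : G.PosDef) {v : Fin d → ℝ} (hv : v ≠ 0) : 0 < normG G v :=
  Real.sqrt_pos.2 (by simpa using hG.dotProduct_mulVec_pos hv)

/-- The supremum defining `dualNorm G r` equals `‖G⁻¹ r‖_G` (attained at `G⁻¹ r`). -/
theorem bddAbove_dualNorm (hG : G.PosDef) (r : Fin d → ℝ) :
    BddAbove (Set.range fun v : {v : Fin d → ℝ // v ≠ 0} => r ⬝ᵥ (v : Fin d → ℝ) / normG G v) := by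
  have hr : r = G *ᵥ (G⁻¹ *ᵥ r) := by
    rw [mulVec_mulVec, mul_nonsing_inv _ hG.det_pos.ne'.isUnit, one_mulVec]
  refine ⟨normG G (G⁻¹ *ᵥ r), ?_⟩
  rintro _ ⟨⟨u, hu⟩, rfl⟩
  rw [div_le_iff₀ (normG_pos hG hu), mul_comm]
  calc r ⬝ᵥ u = u ⬝ᵥ G *ᵥ (G⁻¹ *ᵥ r) := by rw [dotProduct_comm, ← hr]
    _ ≤ normG G u * normG G (G⁻¹ *ᵥ r) := hG.posSemidef.dotProduct_mulVec_le_sqrt_mul_sqrt _ _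

theorem dotProduct_le_dualNorm_mul_normG (hG : G.PosDef) (r v : Fin d → ℝ) :
    r ⬝ᵥ v ≤ dualNorm G r * normG G v := by
  rcases eq_or_ne v 0 with rfl | hv
  · simp [normG]
  · rw [← div_le_iff₀ (normG_pos hG hv)]
    exact le_ciSup (bddAbove_dualNorm hG r) ⟨v, hv⟩

end DualNorm

theorem dotProduct_symPart_mulVec_self {d : ℕ} (A : Matrix (Fin d) (Fin d) ℝ) (v : Fin d → ℝ) :
    v ⬝ᵥ symPart A *ᵥ v = v ⬝ᵥ A *ᵥ v := by
  have ht : v ⬝ᵥ Aᵀ *ᵥ v = v ⬝ᵥ A *ᵥ v := by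
    rw [dotProduct_mulVec, vecMul_transpose, dotProduct_comm]
  simp only [symPart, smul_mulVec, add_mulVec, dotProduct_smul, dotProduct_add, smul_eq_mul, ht]
  ring

theorem two_mul_mul_le_sq_div_add_mul_sq {a b c : ℝ} (hc : 0 < c) :
    2 * a * b ≤ a ^ 2 / c + c * b ^ 2 := by
  have h : a ^ 2 / c + c * b ^ 2 - 2 * a * b = (a - c * b) ^ 2 / c := by
    field_simp
    ring
  linarith [div_nonneg (sq_nonneg (a - c * b)) hc.le]

theorem backwardEuler_energy_step {d : ℕ} {G M A : Matrix (Fin d) (Fin d) ℝ}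
    (hG : G.PosDef) (hM : M.PosSemidef) {Δt α : ℝ} (hΔt : 0 ≤ Δt) (hα : 0 < α)
    {e e₀ r : Fin d → ℝ} (hco : α * normG G e ^ 2 ≤ e ⬝ᵥ symPart A *ᵥ e)
    (h : (M + Δt • A) *ᵥ e = M *ᵥ e₀ - Δt • r) :
    e ⬝ᵥ M *ᵥ e - e₀ ⬝ᵥ M *ᵥ e₀ + Δt * (e ⬝ᵥ symPart A *ᵥ e) ≤ Δt / α * dualNorm G r ^ 2 := by
  have htest : e ⬝ᵥ M *ᵥ e + Δt * (e ⬝ᵥ symPart A *ᵥ e) = e ⬝ᵥ M *ᵥ e₀ - Δt * (e ⬝ᵥ r) := by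
    simpa only [add_mulVec, smul_mulVec, dotProduct_add, dotProduct_smul, dotProduct_sub,
      smul_eq_mul, ← dotProduct_symPart_mulVec_self A e] using congrArg (e ⬝ᵥ ·) h
  have hM2 := hM.two_mul_dotProduct_mulVec_le e e₀
  have hdual : -(e ⬝ᵥ r) ≤ dualNorm G r * normG G e := by
    simpa [dotProduct_comm] using dotProduct_le_dualNorm_mul_normG hG r (-e)
  have hyoung := two_mul_mul_le_sq_div_add_mul_sq (a := dualNorm G r) (b := normG G e) hα
  have habsorb : -2 * (e ⬝ᵥ r) ≤ dualNorm G r ^ 2 / α + e ⬝ᵥ symPart A *ᵥ e := by linarith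
  linear_combination 2 * htest + hM2 + mul_le_mul_of_nonneg_left habsorb hΔt

theorem add_sum_Icc_le_sum_Icc_of_step {E s c : ℕ → ℝ} {N : ℕ} (h0 : E 0 = 0)
    (hstep : ∀ k < N, E (k + 1) - E k + s (k + 1) ≤ c (k + 1)) {n : ℕ} (hn : n ≤ N) :
    E n + ∑ m ∈ Finset.Icc 1 n, s m ≤ ∑ m ∈ Finset.Icc 1 n, c m := by
  induction n with
  | zero => simp [h0]
  | succ n ih =>
    rw [Finset.sum_Icc_succ_top (by omega), Finset.sum_Icc_succ_top (by omega)]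
    linarith [ih (by omega), hstep n (by omega)]

theorem stmt3_general {d : ℕ}
    (G M A : Matrix (Fin d) (Fin d) ℝ) (hG : G.PosDef) (hM : M.PosSemidef)
    (Δt : ℝ) (hΔt : 0 < Δt) (N : ℕ)
    (αA : ℝ) (hαA : 0 < αA)
    (hcoA : ∀ v : Fin d → ℝ, αA * (normG G v)^2 ≤ v ⬝ᵥ (symPart A).mulVec v)
    (e r : ℕ → Fin d → ℝ) (he0 : e 0 = 0)
    (hstep : ∀ k, 1 ≤ k → k ≤ N →
      (M + Δt • A).mulVec (e k) = M.mulVec (e (k - 1)) - Δt • r k)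
    (n : ℕ) (hnN : n ≤ N) :
    e n ⬝ᵥ M.mulVec (e n) +
        Δt * ∑ m ∈ Finset.Icc 1 n, e m ⬝ᵥ (symPart A).mulVec (e m) ≤
      (Δt / αA) * ∑ m ∈ Finset.Icc 1 n, (dualNorm G (r m))^2 := by
  rw [Finset.mul_sum, Finset.mul_sum]
  refine add_sum_Icc_le_sum_Icc_of_step (E := fun k => e k ⬝ᵥ M *ᵥ e k) (by simp [he0])
    (fun k hk => ?_) hnN
  exact backwardEuler_energy_step hG hM hΔt.le hαA (hcoA _) (hstep (k + 1) (by omega) hk)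

theorem stmt3 {d : ℕ} (hd : 1 ≤ d)
    (G M A : Matrix (Fin d) (Fin d) ℝ) (hG : G.PosDef) (hM : M.PosSemidef)
    (Δt : ℝ) (hΔt : 0 < Δt) (N : ℕ) (hN : 1 ≤ N)
    (αA : ℝ) (hαA : 0 < αA)
    (hcoA : ∀ v : Fin d → ℝ, αA * (normG G v)^2 ≤ v ⬝ᵥ (symPart A).mulVec v)
    (e r : ℕ → Fin d → ℝ) (he0 : e 0 = 0)
    (hstep : ∀ k, 1 ≤ k → k ≤ N →
      (M + Δt • A).mulVec (e k) = M.mulVec (e (k - 1)) - Δt • r k)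
    (n : ℕ) (hn1 : 1 ≤ n) (hnN : n ≤ N) :
    e n ⬝ᵥ M.mulVec (e n) +
        Δt * ∑ m ∈ Finset.Icc 1 n, e m ⬝ᵥ (symPart A).mulVec (e m) ≤
      (Δt / αA) * ∑ m ∈ Finset.Icc 1 n, (dualNorm G (r m))^2 :=
  stmt3_general G M A hG hM Δt hΔt N αA hαA hcoA e r he0 hstep n hnN
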